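/- arXiv:1405.1671 — 3 statements merged into one kernel-verified Lean document; each statement's English description precedes it below -/
import Mathlib

section
/- Let G be a connected graph on vertex set V, let m be a distinguished message, let M be a set of messages with m ∈ M, and fix a source vertex u₀. Suppose S : V → ℕ → Finset M is a family of 'sent sets' satisfying: (i) monotonicity: S v t ⊆ S v (t+1) for all v, t; (ii) base: for all ℓ ≥ 1 and t ≥ ℓ, either m ∈ S u₀ t or |S u₀ t| ≥ ℓ; (iii) propagation: for every edge (u,v) of G and every time t and ℓ ≥ 1, if (m ∈ S u t or |S u t| ≥ ℓ) and (m ∈ S v t or |S v t| ≥ ℓ−1), then (m ∈ S v (t+1) or |S v (t+1)| ≥ ℓ). Then for every vertex v and every ℓ ≥ 1, either m ∈ S v (d(u₀,v) + ℓ) or |S v (d(u₀,v) + ℓ)| ≥ ℓ, where d denotes graph distance in G. -/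
/-- Abstract pipelining lemma for BMMB with arbitrary unreliable links:
if the sent-set family `S` is monotone, satisfies the base property at the
source `u₀`, and satisfies the neighbor-propagation property, then every
vertex `v` at distance `d(u₀,v)` has, by time `d(u₀,v) + ℓ`, either sent `m`
or sent at least `ℓ` messages. -/
theorem bmmb_pipelining
    {V : Type*} {M : Type*} [DecidableEq M]
    (G : SimpleGraph V) (hconn : G.Connected)
    (m : M) (u₀ : V)
    (S : V → ℕ → Finset M)
    (hmono : ∀ v t, S v t ⊆ S v (t + 1))
    (hbase : ∀ ℓ t, 1 ≤ ℓ → ℓ ≤ t → m ∈ S u₀ t ∨ ℓ ≤ (S u₀ t).card)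
    (hprop : ∀ u v t ℓ, G.Adj u v → 1 ≤ ℓ →
      (m ∈ S u t ∨ ℓ ≤ (S u t).card) →
      (m ∈ S v t ∨ ℓ - 1 ≤ (S v t).card) →
      (m ∈ S v (t + 1) ∨ ℓ ≤ (S v (t + 1)).card)) :
    ∀ v ℓ, 1 ≤ ℓ →
      m ∈ S v (G.dist u₀ v + ℓ) ∨ ℓ ≤ (S v (G.dist u₀ v + ℓ)).card := by
  -- monotone lift across times
  have hmono' : ∀ v t t', t ≤ t' → S v t ⊆ S v t' := by
    intro v t t' h
    induction t' with
    | zero => simp [Nat.le_zero.mp h]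
    | succ n ih =>
      rcases Nat.lt_or_ge t (n+1) with h' | h'
      · exact (ih (Nat.lt_succ_iff.mp h')).trans (hmono v n)
      · have : t = n + 1 := le_antisymm h h'
        simp [this]
  have lift : ∀ v ℓ t t', t ≤ t' →
      (m ∈ S v t ∨ ℓ ≤ (S v t).card) → (m ∈ S v t' ∨ ℓ ≤ (S v t').card) := by
    intro v ℓ t t' h
    rintro (hm | hc)
    · exact Or.inl (hmono' v t t' h hm)
    · exact Or.inr (hc.trans (Finset.card_le_card (hmono' v t t' h)))
  -- strong induction on d + ℓ
  suffices H : ∀ n v ℓ, 1 ≤ ℓ → G.dist u₀ v + ℓ = n →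
      m ∈ S v (G.dist u₀ v + ℓ) ∨ ℓ ≤ (S v (G.dist u₀ v + ℓ)).card by
    intro v ℓ hℓ; exact H _ v ℓ hℓ rfl
  intro n
  induction n using Nat.strong_induction_on with
  | _ n ih =>
    intro v ℓ hℓ hn
    rcases eq_or_ne u₀ v with rfl | hv
    · simpa using hbase ℓ (G.dist u₀ u₀ + ℓ) hℓ (Nat.le_add_left _ _)
    · have hd : 1 ≤ G.dist u₀ v :=
        Nat.one_le_iff_ne_zero.mpr fun h0 => hv
          ((SimpleGraph.dist_eq_zero_iff_eq_or_not_reachable.mp h0).resolve_right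
            (fun hr => hr (hconn u₀ v)))
      -- find a neighbor u of v on a shortest path
      obtain ⟨p, hp⟩ := (hconn u₀ v).exists_walk_length_eq_dist
      obtain ⟨u, w, q, hq⟩ : ∃ u, ∃ _ : G.Adj u v, ∃ q : G.Walk u₀ u,
          q.length + 1 = p.length := by
        cases hrev : p.reverse with
        | nil =>
          exfalso
          have := congrArg SimpleGraph.Walk.length hrev
          rw [SimpleGraph.Walk.length_reverse] at this
          simp only [SimpleGraph.Walk.length_nil] at this
          omega
        | cons h q =>
          refine ⟨_, h.symm, q.reverse, ?_⟩
          have := congrArg SimpleGraph.Walk.length hrev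
          rw [SimpleGraph.Walk.length_reverse] at this
          rw [SimpleGraph.Walk.length_reverse]
          simp at this; omega
      have hdu : G.dist u₀ u ≤ G.dist u₀ v - 1 := by
        have := SimpleGraph.dist_le q
        omega
      set t := G.dist u₀ v + ℓ - 1 with ht
      have h1 : m ∈ S u t ∨ ℓ ≤ (S u t).card := by
        have := ih (G.dist u₀ u + ℓ) (by omega) u ℓ hℓ rfl
        exact lift u ℓ _ t (by omega) this
      have h2 : m ∈ S v t ∨ ℓ - 1 ≤ (S v t).card := by
        rcases Nat.lt_or_ge ℓ 2 with hℓ2 | hℓ2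
        · right; omega
        · have := ih (G.dist u₀ v + (ℓ - 1)) (by omega) v (ℓ - 1) (by omega) rfl
          exact lift v (ℓ - 1) _ t (by omega) this
      have := hprop u v t ℓ w hℓ h1 h2
      have heq : t + 1 = G.dist u₀ v + ℓ := by omega
      rwa [heq] at this
end

section
/- Under the hypotheses of the abstract pipelining lemma for BMMB (monotone sent sets with base and propagation properties), if the total number of messages is k (|M| = k and m ∈ M), then for every vertex v, m ∈ S v (d(u₀,v) + k). In particular every vertex has sent m by time D + k where D is the diameter of G. -/
/-- Consequence of the BMMB pipelining lemma: with `k` messages in total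
(`|M| = k`, `m ∈ M`), every vertex has sent `m` by time `d(u₀,v) + k`. -/
theorem bmmb_all_receive
    {V : Type*} {M : Type*} [DecidableEq M] [Fintype M]
    (k : ℕ) (hk : Fintype.card M = k)
    (G : SimpleGraph V) (hconn : G.Connected)
    (m : M) (u₀ : V)
    (S : V → ℕ → Finset M)
    (hmono : ∀ v t, S v t ⊆ S v (t + 1))
    (hbase : ∀ ℓ t, 1 ≤ ℓ → ℓ ≤ t → m ∈ S u₀ t ∨ ℓ ≤ (S u₀ t).card)
    (hprop : ∀ u v t ℓ, G.Adj u v → 1 ≤ ℓ →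
      (m ∈ S u t ∨ ℓ ≤ (S u t).card) →
      (m ∈ S v t ∨ ℓ - 1 ≤ (S v t).card) →
      (m ∈ S v (t + 1) ∨ ℓ ≤ (S v (t + 1)).card)) :
    ∀ v : V, m ∈ S v (G.dist u₀ v + k) := by
  -- main pipelining invariant
  have key : ∀ t v ℓ, 1 ≤ ℓ → G.dist u₀ v + ℓ ≤ t →
      m ∈ S v t ∨ ℓ ≤ (S v t).card := by
    intro t
    induction t with
    | zero => intro v ℓ h1 h2; omega
    | succ t ih =>
      intro v ℓ h1 h2
      by_cases hv : v = u₀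
      · subst hv
        rw [SimpleGraph.dist_self] at h2
        exact hbase ℓ (t + 1) h1 (by omega)
      · -- dist positive; find predecessor on a shortest walk
        have hd : G.dist u₀ v ≠ 0 := by
          intro h0
          exact hv ((hconn u₀ v).dist_eq_zero_iff.mp h0).symm
        obtain ⟨p, hp⟩ := hconn.exists_walk_length_eq_dist u₀ v
        have hnn : ¬ p.Nil := by
          rw [SimpleGraph.Walk.not_nil_iff_lt_length]; omega
        obtain ⟨x, hadj, p', rfl⟩ := SimpleGraph.Walk.not_nil_iff.mp hnn
        obtain ⟨y, q, h', hc⟩ := SimpleGraph.Walk.exists_cons_eq_concat hadj p'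
        have hlen : q.length + 1 = G.dist u₀ v := by
          rw [← hp, hc, SimpleGraph.Walk.length_concat]
        have hdy : G.dist u₀ y ≤ q.length := SimpleGraph.dist_le q
        have hu : m ∈ S y t ∨ ℓ ≤ (S y t).card :=
          ih y ℓ h1 (by omega)
        have hvprev : m ∈ S v t ∨ ℓ - 1 ≤ (S v t).card := by
          rcases Nat.eq_or_lt_of_le h1 with h | h
          · right; omega
          · exact (ih v (ℓ - 1) (by omega) (by omega)).imp id (by omega)
        exact hprop y v t ℓ h' h1 hu hvprev
  intro v
  rcases Nat.eq_zero_or_pos k with rfl | hk1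
  · have : Fintype.card M = 0 := hk
    exact absurd (Fintype.card_pos_iff.mpr ⟨m⟩) (by omega)
  · rcases key (G.dist u₀ v + k) v k hk1 le_rfl with h | h
    · exact h
    · by_contra hm
      have hsub : S v (G.dist u₀ v + k) ⊆ Finset.univ.erase m := by
        intro x hx
        exact Finset.mem_erase.mpr ⟨by rintro rfl; exact hm hx, Finset.mem_univ x⟩
      have := Finset.card_le_card hsub
      rw [Finset.card_erase_of_mem (Finset.mem_univ m), Finset.card_univ, hk] at this
      omega
end

section
/- Let H be a connected graph on vertex set S, let m be a message initially held by every node in a nonempty set S_m ⊆ S, and let M be a message set of size k with m ∈ M. Suppose sent-sets M' : S → ℕ → Finset M satisfy: monotonicity in time; for v ∈ S_m, the base property (for all ℓ and t ≥ ℓ, m ∈ M' v t or |M' v t| ≥ ℓ); and the neighbor-propagation property (for every H-edge (u,v), time t, and ℓ ≥ 1: if m ∈ M' u t or |M' u t| ≥ ℓ, and m ∈ M' v t or |M' v t| ≥ ℓ−1, then m ∈ M' v (t+1) or |M' v (t+1)| ≥ ℓ). Then for every v ∈ S, m ∈ M' v (d_v + k), where d_v = min_{u ∈ S_m} d_H(v,u).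 -/
/-- Pipelining for the FMMB spreading subroutine on the overlay graph `H`:
with `k` messages in total, monotone sent-sets satisfying the base property
on the source set `S_m` and the neighbor-propagation property, every node has
sent `m` after `d_v + k` phases, where `d_v` is the `H`-distance from `v` to
`S_m`. -/
theorem fmmb_spreading_pipelining
    {S : Type*} {M : Type*} [DecidableEq M] [Fintype M]
    (k : ℕ) (hk : Fintype.card M = k)
    (H : SimpleGraph S) (hconn : H.Connected)
    (m : M) (Sm : Set S) (hSm : Sm.Nonempty)
    (M' : S → ℕ → Finset M)
    (hmono : ∀ v t, M' v t ⊆ M' v (t + 1))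
    (hbase : ∀ v ∈ Sm, ∀ ℓ t : ℕ, ℓ ≤ t →
      m ∈ M' v t ∨ ℓ ≤ (M' v t).card)
    (hprop : ∀ u v t ℓ, H.Adj u v → 1 ≤ ℓ →
      (m ∈ M' u t ∨ ℓ ≤ (M' u t).card) →
      (m ∈ M' v t ∨ ℓ - 1 ≤ (M' v t).card) →
      (m ∈ M' v (t + 1) ∨ ℓ ≤ (M' v (t + 1)).card)) :
    ∀ v : S, m ∈ M' v (sInf {d : ℕ | ∃ u ∈ Sm, H.dist v u = d} + k) := by
  -- monotonicity over arbitrary time gaps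
  have hsub : ∀ v t t', t ≤ t' → M' v t ⊆ M' v t' := by
    intro v t t' h
    induction h with
    | refl => exact Finset.Subset.refl _
    | step _ ih => exact ih.trans (hmono _ _)
  set D : S → ℕ := fun v => sInf {d : ℕ | ∃ u ∈ Sm, H.dist v u = d} with hD
  have hne : ∀ v : S, {d : ℕ | ∃ u ∈ Sm, H.dist v u = d}.Nonempty := by
    intro v
    obtain ⟨u, hu⟩ := hSm
    exact ⟨H.dist v u, u, hu, rfl⟩
  -- main pipelining claim, by strong induction on D v + ℓ
  have key : ∀ h : ℕ, ∀ ℓ v, D v + ℓ = h →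
      (m ∈ M' v h ∨ ℓ ≤ (M' v h).card) := by
    intro h
    induction h using Nat.strong_induction_on with
    | _ h ih =>
      intro ℓ v hvl
      rcases Nat.eq_zero_or_pos ℓ with hℓ0 | hℓ1
      · subst hℓ0; exact Or.inr (Nat.zero_le _)
      rcases Nat.eq_zero_or_pos (D v) with hd0 | hd1
      · -- D v = 0 : v is a source
        have hmem : D v ∈ {d : ℕ | ∃ u ∈ Sm, H.dist v u = d} := Nat.sInf_mem (hne v)
        rw [hd0] at hmem
        obtain ⟨u, hu, hdist⟩ := hmem
        have hvu : v = u := (hconn.dist_eq_zero_iff).mp hdist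
        subst hvu
        have : ℓ ≤ h := by omega
        exact hbase v hu ℓ h this
      · -- D v ≥ 1 : find a closer neighbor
        have hmem : D v ∈ {d : ℕ | ∃ u ∈ Sm, H.dist v u = d} := Nat.sInf_mem (hne v)
        obtain ⟨u, hu, hdist⟩ := hmem
        obtain ⟨p, hp⟩ := hconn.exists_walk_length_eq_dist v u
        rw [hdist] at hp
        cases p with
        | nil => simp at hp; omega
        | cons hadj q =>
          rename_i w
          have hqw : H.dist w u ≤ D v - 1 := by
            have := SimpleGraph.dist_le q
            simp at hp
            omega
          have hDw : D w ≤ D v - 1 :=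
            le_trans (Nat.sInf_le ⟨u, hu, rfl⟩) hqw
          -- IH at w with ℓ
          have h1 : m ∈ M' w (D w + ℓ) ∨ ℓ ≤ (M' w (D w + ℓ)).card :=
            ih (D w + ℓ) (by omega) ℓ w rfl
          have h1' : m ∈ M' w (D v - 1 + ℓ) ∨ ℓ ≤ (M' w (D v - 1 + ℓ)).card := by
            have hsub' := hsub w (D w + ℓ) (D v - 1 + ℓ) (by omega)
            rcases h1 with h | h
            · exact Or.inl (hsub' h)
            · exact Or.inr (h.trans (Finset.card_le_card hsub'))
          -- IH at v with ℓ - 1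
          have h2 : m ∈ M' v (D v + (ℓ - 1)) ∨ ℓ - 1 ≤ (M' v (D v + (ℓ - 1))).card :=
            ih (D v + (ℓ - 1)) (by omega) (ℓ - 1) v rfl
          have heq : D v + (ℓ - 1) = D v - 1 + ℓ := by omega
          rw [heq] at h2
          have := hprop w v (D v - 1 + ℓ) ℓ hadj.symm hℓ1 h1' h2
          have heq2 : D v - 1 + ℓ + 1 = h := by omega
          rwa [heq2] at this
  intro v
  rcases key (D v + k) k v rfl with h | h
  · exact h
  · have hle : (M' v (D v + k)).card ≤ Fintype.card M :=
      (Finset.card_le_univ _).trans_eq Finset.card_univ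
    have : (M' v (D v + k)) = Finset.univ :=
      Finset.eq_univ_of_card _ (by omega)
    rw [this]; exact Finset.mem_univ m
end
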